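/- arXiv:1907.12964 — 4 statements merged into one kernel-verified Lean document; each statement's English description precedes it below -/
import Mathlib

section
/- Let n be a positive integer and let S and T be finite subsets of ℚ^n. If the ℝ≥0-span of S and the ℝ≥0-span of T (inside ℝ^n) have a common nonzero element, then the ℚ≥0-span of S and the ℚ≥0-span of T (inside ℚ^n) have a common nonzero element. -/
/-- The ℚ≥0-span of a set `S ⊆ ℚ^n`: all finite sums `∑ aᵢ • sᵢ` with `aᵢ ∈ ℚ≥0`, `sᵢ ∈ S`. -/
def qSpanQ {n : ℕ} (S : Set (Fin n → ℚ)) : Set (Fin n → ℚ) :=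
  {x | ∃ (k : ℕ) (a : Fin k → ℚ) (s : Fin k → (Fin n → ℚ)),
    (∀ i, s i ∈ S) ∧ (∀ i, 0 ≤ a i) ∧ x = ∑ i, a i • s i}

/-- The inclusion `ℚ^n ⊆ ℝ^n`. -/
def ratToReal {n : ℕ} (v : Fin n → ℚ) : EuclideanSpace ℝ (Fin n) :=
  WithLp.toLp 2 (fun i => (v i : ℝ))

/-- The ℝ≥0-span of a set `S ⊆ ℚ^n`, viewed inside `ℝ^n`. -/
def rSpanQ {n : ℕ} (S : Set (Fin n → ℚ)) : Set (EuclideanSpace ℝ (Fin n)) :=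
  {x | ∃ (k : ℕ) (a : Fin k → ℝ) (s : Fin k → (Fin n → ℚ)),
    (∀ i, s i ∈ S) ∧ (∀ i, 0 ≤ a i) ∧ x = ∑ i, a i • ratToReal (s i)}

/-!
A common nonzero point of the two real cones is a nonnegative real solution `(a, b)` of the
homogeneous system `∑ aᵢ sᵢ = ∑ bⱼ tⱼ`, whose coefficients are rational. Eliminating one equation
at a time, every real solution of a rational linear system is a real combination of rational
solutions, so rational solutions are dense among the real ones. A rational solution close enough
to `(a, b)` is positive where `(a, b)` is, can be forced to vanish where `(a, b)` vanishes, and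
still gives a nonzero point `∑ aᵢ sᵢ`.
-/

open Matrix

section DotProductKernel

variable {K L ι : Type*} [Field K] [CommRing L] [Fintype ι]

theorem mem_span_map_setOf_dotProduct_eq_zero (φ : K →+* L) (F : Finset (ι → K)) {v : ι → L}
    (hv : ∀ f ∈ F, (φ ∘ f) ⬝ᵥ v = 0) :
    v ∈ Submodule.span L ((φ ∘ ·) '' {w | ∀ f ∈ F, f ⬝ᵥ w = 0}) := by
  classical
  induction F using Finset.induction_on generalizing v with
  | empty =>
    have hbasis :
        Set.range (Pi.basisFun L ι) ⊆ (φ ∘ ·) '' {w | ∀ f ∈ (∅ : Finset _), f ⬝ᵥ w = 0} := by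
      rintro _ ⟨l, rfl⟩
      refine ⟨Pi.single l 1, by simp, ?_⟩
      ext l'
      simp [Pi.single_apply, apply_ite φ]
    exact Submodule.span_mono hbasis ((Pi.basisFun L ι).span_eq ▸ Submodule.mem_top)
  | @insert f F _ ih =>
    rw [Finset.forall_mem_insert] at hv
    have hspan := ih hv.2
    by_cases hW : ∀ w, (∀ g ∈ F, g ⬝ᵥ w = 0) → f ⬝ᵥ w = 0
    · refine Submodule.span_mono ?_ hspan
      rintro _ ⟨w, hw, rfl⟩
      exact ⟨w, Finset.forall_mem_insert _ _ _ |>.2 ⟨hW w hw, hw⟩, rfl⟩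
    push Not at hW
    obtain ⟨w₀, hw₀, hc⟩ := hW
    set c := f ⬝ᵥ w₀
    -- projection along `w₀` onto the solutions of `insert f F`; its extension `P` to `L` fixes `v`
    let π : (ι → K) → ι → K := fun w => w - (c⁻¹ * f ⬝ᵥ w) • w₀
    let P : (ι → L) →ₗ[L] ι → L := LinearMap.id -
      (φ c⁻¹ • dotProductBilin L L (φ ∘ f)).smulRight (φ ∘ w₀)
    have hPv : P v = v := by simp [P, hv.1]
    have hPπ : ∀ w, P (φ ∘ w) = φ ∘ π w := by
      intro w
      ext l
      simp [P, π, RingHom.map_dotProduct]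
    have hπ : ∀ w, (∀ g ∈ F, g ⬝ᵥ w = 0) → ∀ g ∈ insert f F, g ⬝ᵥ π w = 0 := by
      intro w hw
      refine Finset.forall_mem_insert _ _ _ |>.2 ⟨?_, fun g hg => ?_⟩
      · simp only [π, dotProduct_sub, dotProduct_smul, smul_eq_mul]
        rw [mul_right_comm, inv_mul_cancel₀ hc, one_mul, sub_self]
      · simp [π, dotProduct_sub, dotProduct_smul, hw g hg, hw₀ g hg]
    have hPspan := Submodule.mem_map_of_mem (f := P) hspan
    rw [← Submodule.span_image, hPv] at hPspan
    refine Submodule.span_mono ?_ hPspan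
    rintro _ ⟨_, ⟨w, hw, rfl⟩, rfl⟩
    exact ⟨π w, hπ w hw, (hPπ w).symm⟩

theorem exists_dotProduct_eq_zero_comp_mem_open [TopologicalSpace L] [IsTopologicalRing L]
    {φ : K →+* L} (hφ : DenseRange φ) (F : Finset (ι → K)) {v : ι → L}
    (hv : ∀ f ∈ F, (φ ∘ f) ⬝ᵥ v = 0) {U : Set (ι → L)} (hU : IsOpen U) (hvU : v ∈ U) :
    ∃ w : ι → K, (∀ f ∈ F, f ⬝ᵥ w = 0) ∧ φ ∘ w ∈ U := by
  obtain ⟨k, r, g, hrg⟩ :=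
    Submodule.mem_span_set'.1 (mem_span_map_setOf_dotProduct_eq_zero φ F hv)
  choose w hw hwg using fun j => (g j).2
  let Φ : (Fin k → L) → ι → L := fun ρ => ∑ j, ρ j • (g j : ι → L)
  have hΦU : IsOpen (Φ ⁻¹' U) := hU.preimage (by fun_prop)
  obtain ⟨ρ, hρ⟩ := (DenseRange.piMap fun _ => hφ).exists_mem_open hΦU ⟨r, by simpa [Φ, hrg]⟩
  refine ⟨∑ j, ρ j • w j, fun f hf => by
    simp [dotProduct_sum, dotProduct_smul, fun j => hw j f hf], ?_⟩
  have hcast : φ ∘ ∑ j, ρ j • w j = Φ (Pi.map (fun _ => φ) ρ) := by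
    ext l
    simp [Φ, ← hwg]
  exact hcast ▸ hρ

theorem exists_rat_nonneg_dotProduct_eq_zero_cast_mem_open (F : Finset (ι → ℚ)) {v : ι → ℝ}
    (hv₀ : 0 ≤ v) (hv : ∀ f ∈ F, ((↑) ∘ f) ⬝ᵥ v = 0) {U : Set (ι → ℝ)} (hU : IsOpen U)
    (hvU : v ∈ U) :
    ∃ q : ι → ℚ, 0 ≤ q ∧ (∀ f ∈ F, f ⬝ᵥ q = 0) ∧ (↑) ∘ q ∈ U := by
  classical
  let F' := F ∪ ({l | v l = 0} : Finset ι).image (Pi.single · 1)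
  let U' := U ∩ Set.pi {l | 0 < v l} fun _ => Set.Ioi 0
  have hv' : ∀ f ∈ F', (Rat.castHom ℝ ∘ f) ⬝ᵥ v = 0 := by
    simp only [F', Finset.mem_union, Finset.mem_image, Finset.mem_filter]
    rintro f (hf | ⟨l, ⟨-, hl⟩, rfl⟩)
    · exact hv f hf
    · simp [dotProduct, Pi.single_apply, apply_ite (Rat.cast : ℚ → ℝ), hl]
  have hU' : IsOpen U' := hU.inter (isOpen_set_pi (Set.toFinite _) fun _ _ => isOpen_Ioi)
  obtain ⟨q, hqF', hqU'⟩ := exists_dotProduct_eq_zero_comp_mem_open Rat.denseRange_cast F' hv' hU'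
    ⟨hvU, fun l hl => hl⟩
  refine ⟨q, fun l => ?_, fun f hf => hqF' f (Finset.mem_union_left _ hf), hqU'.1⟩
  rcases (hv₀ l).eq_or_lt with hl | hl
  · have hql := hqF' (Pi.single l 1)
      (Finset.mem_union_right _ (Finset.mem_image_of_mem _ (by simp [hl.symm])))
    simp only [single_dotProduct, one_mul] at hql
    simp [hql]
  · exact_mod_cast (show (0 : ℝ) < q l from hqU'.2 l hl).le

end DotProductKernel

section RatToReal

variable {n : ℕ} {κ : Type*} [Fintype κ]

theorem ratToReal_sum_smul (c : κ → ℚ) (s : κ → Fin n → ℚ) :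
    ratToReal (∑ i, c i • s i) = ∑ i, (c i : ℝ) • ratToReal (s i) := by
  ext m
  simp [ratToReal]

theorem sum_smul_ratToReal_apply (a : κ → ℝ) (s : κ → Fin n → ℚ) (m : Fin n) :
    (∑ i, a i • ratToReal (s i)) m = ∑ i, a i * s i m := by
  simp [ratToReal]

end RatToReal

theorem stmt1_general (n : ℕ) (S T : Set (Fin n → ℚ))
    (h : ∃ x : EuclideanSpace ℝ (Fin n), x ≠ 0 ∧ x ∈ rSpanQ S ∧ x ∈ rSpanQ T) :
    ∃ x : Fin n → ℚ, x ≠ 0 ∧ x ∈ qSpanQ S ∧ x ∈ qSpanQ T := by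
  obtain ⟨x, hx0, ⟨k₁, a, s, hs, ha, rfl⟩, ⟨k₂, b, t, ht, hb, hab⟩⟩ := h
  let e : Fin n → Fin k₁ ⊕ Fin k₂ → ℚ := fun m => Sum.elim (fun i => s i m) (fun j => -t j m)
  have he : ∀ m, ((↑) ∘ e m) ⬝ᵥ Sum.elim a b = 0 := by
    intro m
    have habm := congrArg (· m) hab
    simp only [sum_smul_ratToReal_apply] at habm
    simp [e, dotProduct, Fintype.sum_sum_type, habm, mul_comm]
  obtain ⟨q, hq₀, hqe, hqU⟩ := exists_rat_nonneg_dotProduct_eq_zero_cast_mem_open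
    (Finset.univ.image e) (v := Sum.elim a b) (by rintro (i | j) <;> simp [ha, hb])
    (by simpa using he) (U := {y | ∑ i, y (.inl i) • ratToReal (s i) ≠ 0})
    (isOpen_ne_fun (by fun_prop) continuous_const) (by simpa using hx0)
  refine ⟨∑ i, q (.inl i) • s i, fun h0 => hqU ?_, ⟨k₁, _, s, hs, fun i => hq₀ _, rfl⟩,
    ⟨k₂, fun j => q (.inr j), t, ht, fun j => hq₀ _, ?_⟩⟩
  · have hcast0 : ratToReal (∑ i, q (.inl i) • s i) = 0 := by
      rw [h0]
      ext m
      simp [ratToReal]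
    simpa [ratToReal_sum_smul] using hcast0
  · funext m
    have hqm := hqe (e m) (Finset.mem_image_of_mem _ (Finset.mem_univ m))
    simp only [e, dotProduct, Fintype.sum_sum_type, Sum.elim_inl, Sum.elim_inr, neg_mul,
      Finset.sum_neg_distrib] at hqm
    simp only [Finset.sum_apply, Pi.smul_apply, smul_eq_mul, mul_comm]
    linarith

/-- If the ℝ≥0-spans of finite sets `S, T ⊆ ℚ^n` share a nonzero element,
then so do their ℚ≥0-spans. -/
theorem stmt1 (n : ℕ) (hn : 0 < n) (S T : Set (Fin n → ℚ)) (hS : S.Finite) (hT : T.Finite)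
    (h : ∃ x : EuclideanSpace ℝ (Fin n), x ≠ 0 ∧ x ∈ rSpanQ S ∧ x ∈ rSpanQ T) :
    ∃ x : Fin n → ℚ, x ≠ 0 ∧ x ∈ qSpanQ S ∧ x ∈ qSpanQ T :=
  stmt1_general n S T h
end

section
/- Let E be a finite-dimensional real normed vector space, and let C and D be nonempty closed subsets of E each of which is invariant under multiplication by every nonnegative real scalar (in particular both contain 0). If there exists δ > 0 such that the set {x ∈ D : dist(x, C) ≤ δ} is unbounded, then C ∩ D contains a nonzero vector. -/
/-- Let `E` be a finite-dimensional real normed vector space and `C, D` nonempty closed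
subsets, each invariant under multiplication by every nonnegative real scalar.
If for some `δ > 0` the set of points of `D` within distance `δ` of `C` is unbounded,
then `C ∩ D` contains a nonzero vector. -/
theorem stmt3 (E : Type*) [NormedAddCommGroup E] [NormedSpace ℝ E] [FiniteDimensional ℝ E]
    (C D : Set E) (hCne : C.Nonempty) (hDne : D.Nonempty)
    (hCcl : IsClosed C) (hDcl : IsClosed D)
    (hCcone : ∀ t : ℝ, 0 ≤ t → ∀ c ∈ C, t • c ∈ C)
    (hDcone : ∀ t : ℝ, 0 ≤ t → ∀ d ∈ D, t • d ∈ D)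
    (h : ∃ δ : ℝ, 0 < δ ∧
      ¬ Bornology.IsBounded {x | x ∈ D ∧ Metric.infDist x C ≤ δ}) :
    ∃ x : E, x ≠ 0 ∧ x ∈ C ∩ D := by
  obtain ⟨δ, hδ, hub⟩ := h
  rw [isBounded_iff_forall_norm_le] at hub
  push_neg at hub
  choose x hxmem hxnorm using fun n : ℕ => hub (n + 1)
  have hxD : ∀ n, x n ∈ D := fun n => (hxmem n).1
  have hxC : ∀ n, Metric.infDist (x n) C ≤ δ := fun n => (hxmem n).2
  have hxpos : ∀ n, (0:ℝ) < ‖x n‖ := fun n =>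
    lt_trans (by positivity) (hxnorm n)
  choose c hcC hcd using fun n => hCcl.exists_infDist_eq_dist hCne (x n)
  set y : ℕ → E := fun n => ‖x n‖⁻¹ • x n with hy
  have hysphere : ∀ n, y n ∈ Metric.sphere (0:E) 1 := by
    intro n
    simp [hy, norm_smul, abs_of_pos (inv_pos.2 (hxpos n)),
      inv_mul_cancel₀ (hxpos n).ne']
  obtain ⟨z, hz, φ, hφ, hconv⟩ :=
    (isCompact_sphere (0:E) 1).tendsto_subseq hysphere
  refine ⟨z, ?_, ?_, ?_⟩
  · intro h0
    rw [h0] at hz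
    simpa using hz
  · -- z ∈ C : scaled c's converge to z
    have hcmem : ∀ n, ‖x (φ n)‖⁻¹ • c (φ n) ∈ C := fun n =>
      hCcone _ (inv_nonneg.2 (hxpos _).le) _ (hcC _)
    have hdist : Filter.Tendsto
        (fun n => dist ((y ∘ φ) n) (‖x (φ n)‖⁻¹ • c (φ n))) Filter.atTop (nhds 0) := by
      have hle : ∀ n, dist ((y ∘ φ) n) (‖x (φ n)‖⁻¹ • c (φ n)) ≤ δ / (n + 1) := by
        intro n
        have h1 : dist ((y ∘ φ) n) (‖x (φ n)‖⁻¹ • c (φ n))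
            = ‖x (φ n)‖⁻¹ * dist (x (φ n)) (c (φ n)) := by
          simp [hy, dist_eq_norm, ← smul_sub, norm_smul,
            abs_of_pos (inv_pos.2 (hxpos _))]
        rw [h1, ← hcd]
        have hn : (n : ℝ) + 1 ≤ ‖x (φ n)‖ := by
          have := hxnorm (φ n)
          have hφn : (n : ℝ) ≤ (φ n : ℝ) := by exact_mod_cast hφ.id_le n
          linarith
        have h2 : ‖x (φ n)‖⁻¹ ≤ ((n:ℝ)+1)⁻¹ :=
          inv_anti₀ (by positivity) hn
        calc ‖x (φ n)‖⁻¹ * Metric.infDist (x (φ n)) C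
            ≤ ((n:ℝ)+1)⁻¹ * δ := by
              apply mul_le_mul h2 (hxC _) Metric.infDist_nonneg (by positivity)
          _ = δ / (n + 1) := by ring
      have hten : Filter.Tendsto (fun n : ℕ => δ / ((n:ℝ) + 1)) Filter.atTop (nhds 0) := by
        have := tendsto_one_div_add_atTop_nhds_zero_nat.const_mul δ
        simpa [div_eq_mul_inv, mul_comm] using this
      exact squeeze_zero (fun n => dist_nonneg) hle hten
    have : Filter.Tendsto (fun n => ‖x (φ n)‖⁻¹ • c (φ n)) Filter.atTop (nhds z) :=
      hconv.congr_dist (by simpa [dist_comm] using hdist)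
    exact hCcl.mem_of_tendsto this (Filter.Eventually.of_forall hcmem)
  · have hymem : ∀ n, (y ∘ φ) n ∈ D := fun n =>
      hDcone _ (inv_nonneg.2 (hxpos _).le) _ (hxD _)
    exact hDcl.mem_of_tendsto hconv (Filter.Eventually.of_forall hymem)
end

section
/- Let S be a nonempty subset of ℤ^n (viewed inside ℝ^n). Then the limit cone of S equals {0} if and only if S is a finite set. -/
/-!
A nonempty bounded set has limit cone `{0}`, since `εⱼ • μⱼ → 0` whenever `εⱼ → 0` and the
`μⱼ` stay bounded. An unbounded set `S` in a proper space has a unit vector in its limit cone: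
the normalised points `μⱼ / ‖μⱼ‖` of a sequence in `S` with `‖μⱼ‖ → ∞` have a convergent
subsequence on the compact unit sphere. For sets of points of `ℤⁿ`, bounded means finite.
-/

/-- The limit cone `S∞` of a subset `S` of a real normed vector space: all vectors
`v = lim εⱼ • μⱼ` for sequences `μⱼ ∈ S` and positive reals `εⱼ → 0`. -/
def limitCone {E : Type*} [NormedAddCommGroup E] [NormedSpace ℝ E] (S : Set E) : Set E :=
  {v | ∃ (μ : ℕ → E) (ε : ℕ → ℝ), (∀ j, μ j ∈ S) ∧ (∀ j, 0 < ε j) ∧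
    Filter.Tendsto ε Filter.atTop (nhds 0) ∧
    Filter.Tendsto (fun j => ε j • μ j) Filter.atTop (nhds v)}

open Filter Topology Bornology Set

section LimitCone

variable {E : Type*} [NormedAddCommGroup E] [NormedSpace ℝ E] {S : Set E}

theorem zero_mem_limitCone (hS : S.Nonempty) : (0 : E) ∈ limitCone S := by
  obtain ⟨s, hs⟩ := hS
  have hε : Tendsto (fun j : ℕ => 1 / ((j : ℝ) + 1)) atTop (𝓝 0) :=
    tendsto_one_div_add_atTop_nhds_zero_nat
  exact ⟨fun _ => s, _, fun _ => hs, fun j => by positivity, hε, by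
    simpa using hε.smul_const s⟩

theorem limitCone_subset_zero_of_isBounded (hS : IsBounded S) : limitCone S ⊆ {0} := by
  rintro v ⟨μ, ε, hμS, -, hε, hv⟩
  obtain ⟨C, hC⟩ := isBounded_iff_forall_norm_le.1 hS
  have hμ : IsBoundedUnder (· ≤ ·) atTop (norm ∘ μ) :=
    isBoundedUnder_of ⟨C, fun j => hC _ (hμS j)⟩
  exact tendsto_nhds_unique hv (hε.zero_smul_isBoundedUnder_le hμ)

theorem exists_norm_eq_one_mem_limitCone [ProperSpace E] (hS : ¬IsBounded S) :
    ∃ v ∈ limitCone S, ‖v‖ = 1 := by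
  simp only [isBounded_iff_forall_norm_le, not_exists, not_forall, not_le] at hS
  choose μ hμS hμ using fun j : ℕ => hS j
  have hμ0 : ∀ j, μ j ≠ 0 := fun j => norm_pos_iff.1 ((Nat.cast_nonneg j).trans_lt (hμ j))
  have hnorm : Tendsto (fun j => ‖μ j‖) atTop atTop :=
    tendsto_atTop_mono (fun j => (hμ j).le) tendsto_natCast_atTop_atTop
  have hsphere : ∀ j, ‖μ j‖⁻¹ • μ j ∈ Metric.sphere (0 : E) 1 := fun j => by
    simpa using norm_smul_inv_norm (𝕜 := ℝ) (hμ0 j)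
  obtain ⟨v, hv, φ, hφ, hlim⟩ := (isCompact_sphere (0 : E) 1).tendsto_subseq hsphere
  refine ⟨v, ⟨μ ∘ φ, fun j => ‖μ (φ j)‖⁻¹, fun j => hμS _,
    fun j => inv_pos.2 (norm_pos_iff.2 (hμ0 _)), hnorm.inv_tendsto_atTop.comp hφ.tendsto_atTop,
    hlim⟩, by simpa using hv⟩

end LimitCone

theorem EuclideanSpace.finite_of_isBounded_of_forall_int {ι : Type*} [Fintype ι]
    {S : Set (EuclideanSpace ℝ ι)} (hint : ∀ x ∈ S, ∀ i, ∃ m : ℤ, x i = m) (hS : IsBounded S) :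
    S.Finite := by
  obtain ⟨R, hR⟩ := isBounded_iff_forall_norm_le.1 hS
  let c : (ι → ℤ) → EuclideanSpace ℝ ι := fun g => WithLp.toLp 2 fun i => (g i : ℝ)
  have hsub : S ⊆ c '' univ.pi fun _ => Icc (-⌈R⌉) ⌈R⌉ := by
    intro x hx
    choose g hg using hint x hx
    refine ⟨g, fun i _ => ?_, by ext i; simp [c, hg]⟩
    have hgi : |(g i : ℝ)| ≤ ⌈R⌉ := by
      simpa [hg] using (PiLp.norm_apply_le x i).trans ((hR x hx).trans (Int.le_ceil R))
    exact abs_le.1 (by exact_mod_cast hgi)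
  exact ((Set.Finite.pi fun _ => Set.finite_Icc _ _).image c).subset hsub

/-- For a nonempty subset `S` of `ℤ^n` (viewed inside `ℝ^n`), the limit cone of `S`
equals `{0}` if and only if `S` is finite. -/
theorem stmt7 (n : ℕ) (S : Set (EuclideanSpace ℝ (Fin n)))
    (hint : ∀ x ∈ S, ∀ i : Fin n, ∃ m : ℤ, x i = (m : ℝ))
    (hne : S.Nonempty) :
    limitCone S = {0} ↔ S.Finite := by
  refine ⟨fun h => ?_, fun hS => ?_⟩
  · by_contra hfin
    have hunb : ¬IsBounded S := fun hb =>
      hfin (EuclideanSpace.finite_of_isBounded_of_forall_int hint hb)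
    obtain ⟨v, hv, hv1⟩ := exists_norm_eq_one_mem_limitCone hunb
    rw [h, mem_singleton_iff] at hv
    simp [hv] at hv1
  · exact (limitCone_subset_zero_of_isBounded hS.isBounded).antisymm
      (singleton_subset_iff.2 (zero_mem_limitCone hne))
end

section
/- Let E be a finite-dimensional real normed vector space, let S and T be subsets of E with T nonempty, and let δ ≥ 0. If every point of S lies within distance δ of T (i.e. dist(s, T) ≤ δ for all s ∈ S), then the limit cone of S is contained in the limit cone of T; that is, S∞ ⊆ T∞. -/
/-- If every point of `S` lies within distance `δ` of a nonempty set `T`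
(in a finite-dimensional real normed vector space), then `S∞ ⊆ T∞`. -/
theorem stmt9 (E : Type*) [NormedAddCommGroup E] [NormedSpace ℝ E] [FiniteDimensional ℝ E]
    (S T : Set E) (hT : T.Nonempty) (δ : ℝ) (hδ : 0 ≤ δ)
    (h : ∀ s ∈ S, Metric.infDist s T ≤ δ) :
    limitCone S ⊆ limitCone T := by
  rintro v ⟨μ, ε, hμS, hεpos, hε0, hlim⟩
  -- choose t j ∈ T with dist (μ j) (t j) < δ + 1
  have hchoice : ∀ j, ∃ t ∈ T, dist (μ j) t < δ + 1 := by
    intro j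
    have := h (μ j) (hμS j)
    have hlt : Metric.infDist (μ j) T < δ + 1 := lt_of_le_of_lt this (by linarith)
    exact (Metric.infDist_lt_iff hT).mp hlt
  choose t htT htd using hchoice
  refine ⟨t, ε, htT, hεpos, hε0, ?_⟩
  have hdiff : Filter.Tendsto (fun j => ε j • μ j - ε j • t j) Filter.atTop (nhds 0) := by
    rw [tendsto_zero_iff_norm_tendsto_zero]
    apply squeeze_zero (fun j => norm_nonneg _) (g := fun j => ε j * (δ + 1))
    · intro j
      rw [← smul_sub, norm_smul, Real.norm_eq_abs, abs_of_pos (hεpos j)]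
      have : ‖μ j - t j‖ ≤ δ + 1 := by
        rw [← dist_eq_norm]; exact le_of_lt (htd j)
      exact mul_le_mul_of_nonneg_left this (le_of_lt (hεpos j))
    · simpa using hε0.mul (tendsto_const_nhds (x := δ + 1))
  have := hlim.sub hdiff
  simpa using this
end
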